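/- Let φ(x) = exp(−x²/2)/√(2π) be the standard normal density and Φ its cumulative distribution function. Then for every c > 0, 1 − 2cφ(c) + 2(c² − 1)Φ(−c) > (1 − 2Φ(−c))²; equivalently, G(c) = (1 − 2cφ(c) + 2(c² − 1)Φ(−c)) / (1 − 2Φ(−c))² > 1. -/

import Mathlib

open MeasureTheory

/-- The standard normal density φ(x) = exp(−x²/2)/√(2π). -/
noncomputable def stdPdf (x : ℝ) : ℝ := Real.exp (-x ^ 2 / 2) / Real.sqrt (2 * Real.pi)

/-- The standard normal cumulative distribution function Φ(x) = ∫_{−∞}^x φ. -/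
noncomputable def stdCdf (x : ℝ) : ℝ := ∫ t in Set.Iic x, stdPdf t

/-- G(c): the asymptotic variance of the Huber M-estimate of location with
tuning constant c, under standard normal errors. -/
noncomputable def huberVar (c : ℝ) : ℝ :=
  (1 - 2 * c * stdPdf c + 2 * (c ^ 2 - 1) * stdCdf (-c)) / (1 - 2 * stdCdf (-c)) ^ 2

/-!
Write p = φ(c), q = Φ(-c) and R = ∫_c^∞ (x - c)² φ = (1 + c²) q - c p. Then

  numerator - denominator = 2 R (1 - 2q - 2cp) + 4c² (q (cp + q) - p²).

Here 1 - 2q - 2cp = ∫_{-c}^{c} (φ(x) - φ(c)) dx > 0 because φ peaks at 0, R > 0, and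
q (cp + q) ≥ p² is the Cauchy–Schwarz inequality (∫_c^∞ x φ)² ≤ ∫_c^∞ φ · ∫_c^∞ x² φ;
the tail moments ∫_c^∞ x φ = p and ∫_c^∞ x² φ = cp + q come from φ' = -x φ.
-/

open Set Filter Real Topology

theorem sq_integral_mul_le_integral_mul_integral {α : Type*} [MeasurableSpace α]
    {μ : Measure α} {w f : α → ℝ} (hw : 0 ≤ᵐ[μ] w) (hw_int : Integrable w μ)
    (hfw : Integrable (fun x => f x * w x) μ) (hffw : Integrable (fun x => f x ^ 2 * w x) μ) :
    (∫ x, f x * w x ∂μ) ^ 2 ≤ (∫ x, w x ∂μ) * ∫ x, f x ^ 2 * w x ∂μ := by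
  have hquad (t : ℝ) : 0 ≤ (∫ x, w x ∂μ) * (t * t) + (-2 * ∫ x, f x * w x ∂μ) * t +
      ∫ x, f x ^ 2 * w x ∂μ := by
    have hexp : ∫ x, (f x - t) ^ 2 * w x ∂μ =
        ∫ x, (f x ^ 2 * w x - 2 * t * (f x * w x) + t ^ 2 * w x) ∂μ := by
      congr 1 with x; ring
    have hsub : Integrable (fun x => f x ^ 2 * w x - 2 * t * (f x * w x)) μ :=
      hffw.sub (hfw.const_mul _)
    rw [integral_add hsub (hw_int.const_mul _), integral_sub hffw (hfw.const_mul _),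
      integral_const_mul, integral_const_mul] at hexp
    have : 0 ≤ ∫ x, (f x - t) ^ 2 * w x ∂μ :=
      integral_nonneg_of_ae (hw.mono fun x hx => mul_nonneg (sq_nonneg _) hx)
    linarith
  have := discrim_le_zero hquad
  rw [discrim] at this
  linarith

theorem stdPdf_pos (x : ℝ) : 0 < stdPdf x := by
  unfold stdPdf; positivity

theorem stdPdf_neg (x : ℝ) : stdPdf (-x) = stdPdf x := by
  simp [stdPdf]

theorem stdPdf_lt_stdPdf_of_sq_lt {x y : ℝ} (h : x ^ 2 < y ^ 2) : stdPdf y < stdPdf x := by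
  unfold stdPdf; gcongr

theorem stdPdf_le_stdPdf_of_sq_le {x y : ℝ} (h : x ^ 2 ≤ y ^ 2) : stdPdf y ≤ stdPdf x := by
  unfold stdPdf; gcongr

theorem stdPdf_eq_mul_exp (x : ℝ) :
    stdPdf x = (√(2 * π))⁻¹ * exp (-(1 / 2) * x ^ 2) := by
  rw [stdPdf]; ring_nf

theorem continuous_stdPdf : Continuous stdPdf := by
  unfold stdPdf; fun_prop

theorem hasDerivAt_stdPdf (x : ℝ) : HasDerivAt stdPdf (-x * stdPdf x) x := by
  have h : HasDerivAt (fun t : ℝ => -t ^ 2 / 2) (-x) x :=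
    ((hasDerivAt_pow 2 x).fun_neg.div_const 2).congr_deriv (by norm_num; ring)
  exact (h.exp.div_const √(2 * π)).congr_deriv (by unfold stdPdf; ring)

theorem integrable_pow_mul_stdPdf (n : ℕ) : Integrable fun x => x ^ n * stdPdf x := by
  have h := (integrable_rpow_mul_exp_neg_mul_sq (b := 1 / 2) (by norm_num)
    (s := n) (by linarith [n.cast_nonneg (α := ℝ)])).const_mul (√(2 * π))⁻¹
  simp only [rpow_natCast] at h
  convert h using 2 with x
  rw [stdPdf_eq_mul_exp]; ring

theorem integrable_stdPdf : Integrable stdPdf := by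
  simpa using integrable_pow_mul_stdPdf 0

theorem integrable_mul_stdPdf : Integrable fun x => x * stdPdf x := by
  simpa using integrable_pow_mul_stdPdf 1

theorem tendsto_pow_mul_stdPdf_atTop (n : ℕ) :
    Tendsto (fun x => x ^ n * stdPdf x) atTop (𝓝 0) := by
  have h := ((rpow_mul_exp_neg_mul_sq_isLittleO_exp_neg (b := 1 / 2) (by norm_num) n)
    |>.tendsto_zero_of_tendsto (tendsto_exp_atBot.comp
      (tendsto_id.const_mul_atTop_of_neg (by norm_num)))).const_mul (√(2 * π))⁻¹
  simp only [rpow_natCast, mul_zero] at h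
  convert h using 2 with x
  rw [stdPdf_eq_mul_exp]; ring

theorem integral_stdPdf : ∫ x, stdPdf x = 1 := by
  simp_rw [stdPdf_eq_mul_exp]
  rw [integral_const_mul, integral_gaussian, show π / (1 / 2) = 2 * π by ring]
  exact inv_mul_cancel₀ (by positivity)

theorem stdCdf_neg (x : ℝ) : stdCdf (-x) = ∫ t in Ioi x, stdPdf t := by
  rw [stdCdf, ← integral_comp_neg_Ioi]
  simp [stdPdf_neg]

theorem integral_Ioi_mul_stdPdf (c : ℝ) : ∫ x in Ioi c, x * stdPdf x = stdPdf c := by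
  have h := integral_Ioi_of_hasDerivAt_of_tendsto' (a := c) (f := fun x => -stdPdf x)
    (fun x _ => by simpa using (hasDerivAt_stdPdf x).fun_neg)
    integrable_mul_stdPdf.integrableOn
    (by simpa using (tendsto_pow_mul_stdPdf_atTop 0).neg)
  simpa using h

theorem integral_Ioi_sq_mul_stdPdf (c : ℝ) :
    ∫ x in Ioi c, x ^ 2 * stdPdf x = c * stdPdf c + stdCdf (-c) := by
  have h := integral_Ioi_of_hasDerivAt_of_tendsto' (a := c) (f := fun x => -(x * stdPdf x))
    (f' := fun x => (x ^ 2 - 1) * stdPdf x)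
    (fun x _ => ((hasDerivAt_id' x).fun_mul (hasDerivAt_stdPdf x)).fun_neg.congr_deriv (by ring))
    (((integrable_pow_mul_stdPdf 2).sub (integrable_pow_mul_stdPdf 0)).integrableOn.congr_fun
      (fun x _ => by simp; ring) measurableSet_Ioi)
    (by simpa using (tendsto_pow_mul_stdPdf_atTop 1).neg)
  have hsplit : ∫ x in Ioi c, (x ^ 2 - 1) * stdPdf x =
      (∫ x in Ioi c, x ^ 2 * stdPdf x) - ∫ x in Ioi c, stdPdf x := by
    simp_rw [sub_mul, one_mul]
    exact integral_sub (integrable_pow_mul_stdPdf 2).integrableOn integrable_stdPdf.integrableOn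
  rw [stdCdf_neg]
  linarith

theorem integral_Ioi_sub_sq_mul_stdPdf (c : ℝ) :
    ∫ x in Ioi c, (x - c) ^ 2 * stdPdf x = (1 + c ^ 2) * stdCdf (-c) - c * stdPdf c := by
  have h2 := (integrable_pow_mul_stdPdf 2).integrableOn (s := Ioi c)
  have h1 := (integrable_mul_stdPdf.const_mul (2 * c)).integrableOn (s := Ioi c)
  have h0 := (integrable_stdPdf.const_mul (c ^ 2)).integrableOn (s := Ioi c)
  have hexp : ∫ x in Ioi c, (x - c) ^ 2 * stdPdf x = ∫ x in Ioi c,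
      (x ^ 2 * stdPdf x - 2 * c * (x * stdPdf x) + c ^ 2 * stdPdf x) := by
    congr 1 with x; ring
  have h21 : IntegrableOn (fun x => x ^ 2 * stdPdf x - 2 * c * (x * stdPdf x)) (Ioi c) :=
    h2.sub h1
  rw [hexp, integral_add h21 h0, integral_sub h2 h1, integral_const_mul,
    integral_const_mul]
  simp only [integral_Ioi_sq_mul_stdPdf, integral_Ioi_mul_stdPdf, ← stdCdf_neg]
  ring

theorem integrable_sub_sq_mul_stdPdf (c : ℝ) : Integrable fun x => (x - c) ^ 2 * stdPdf x := by
  refine (((integrable_pow_mul_stdPdf 2).sub (integrable_mul_stdPdf.const_mul (2 * c))).add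
    (integrable_stdPdf.const_mul (c ^ 2))).congr (ae_of_all _ fun x => ?_)
  simp only [Pi.add_apply, Pi.sub_apply]
  ring

theorem mul_stdPdf_lt_one_add_sq_mul_stdCdf_neg (c : ℝ) :
    c * stdPdf c < (1 + c ^ 2) * stdCdf (-c) := by
  rw [← sub_pos, ← integral_Ioi_sub_sq_mul_stdPdf, setIntegral_pos_iff_support_of_nonneg_ae
    (ae_of_all _ fun x => mul_nonneg (sq_nonneg _) (stdPdf_pos x).le)
    (integrable_sub_sq_mul_stdPdf c).integrableOn]
  have hsupp : Function.support (fun x => (x - c) ^ 2 * stdPdf x) ∩ Ioi c = Ioi c :=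
    inter_eq_right.2 fun x hx => (mul_pos (pow_pos (sub_pos.2 hx) 2) (stdPdf_pos x)).ne'
  rw [hsupp]
  simp

theorem sq_stdPdf_le_stdCdf_neg_mul (c : ℝ) :
    stdPdf c ^ 2 ≤ stdCdf (-c) * (c * stdPdf c + stdCdf (-c)) := by
  have h := sq_integral_mul_le_integral_mul_integral (μ := volume.restrict (Ioi c))
    (f := fun x => x) (ae_of_all _ fun x => (stdPdf_pos x).le) integrable_stdPdf.integrableOn
    integrable_mul_stdPdf.restrict (integrable_pow_mul_stdPdf 2).integrableOn
  simpa only [integral_Ioi_mul_stdPdf, integral_Ioi_sq_mul_stdPdf, ← stdCdf_neg] using h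

theorem stdCdf_add_stdCdf_neg (x : ℝ) : stdCdf x + stdCdf (-x) = 1 := by
  rw [stdCdf_neg, stdCdf, intervalIntegral.integral_Iic_add_Ioi integrable_stdPdf.integrableOn
    integrable_stdPdf.integrableOn, integral_stdPdf]

theorem intervalIntegral_stdPdf_neg_self (c : ℝ) :
    ∫ x in (-c)..c, stdPdf x = 1 - 2 * stdCdf (-c) := by
  rw [← intervalIntegral.integral_Iic_sub_Iic integrable_stdPdf.integrableOn
    integrable_stdPdf.integrableOn]
  change stdCdf c - stdCdf (-c) = _
  linarith [stdCdf_add_stdCdf_neg c]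

theorem two_mul_mul_stdPdf_lt_intervalIntegral {c : ℝ} (hc : 0 < c) :
    2 * c * stdPdf c < ∫ x in (-c)..c, stdPdf x := by
  have h := intervalIntegral.integral_lt_integral_of_continuousOn_of_le_of_exists_lt
    (f := fun _ => stdPdf c) (by linarith : -c < c) continuousOn_const
    continuous_stdPdf.continuousOn
    (fun x hx => stdPdf_le_stdPdf_of_sq_le (by nlinarith [hx.1, hx.2]))
    ⟨0, ⟨by linarith, hc.le⟩, stdPdf_lt_stdPdf_of_sq_lt (by nlinarith)⟩
  simpa [two_mul] using h

/-- for every c > 0 the numerator of G(c) strictly exceeds its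
denominator; equivalently G(c) > 1. -/
theorem stmt_14 (c : ℝ) (hc : 0 < c) :
    (1 - 2 * stdCdf (-c)) ^ 2 < 1 - 2 * c * stdPdf c + 2 * (c ^ 2 - 1) * stdCdf (-c) ∧
    1 < huberVar c := by
  have hmid : 2 * c * stdPdf c < 1 - 2 * stdCdf (-c) :=
    intervalIntegral_stdPdf_neg_self c ▸ two_mul_mul_stdPdf_lt_intervalIntegral hc
  have htail := mul_stdPdf_lt_one_add_sq_mul_stdCdf_neg c
  have hcs := sq_stdPdf_le_stdCdf_neg_mul c
  have key :
      (1 - 2 * stdCdf (-c)) ^ 2 < 1 - 2 * c * stdPdf c + 2 * (c ^ 2 - 1) * stdCdf (-c) := by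
    linear_combination
      2 * mul_pos (sub_pos.2 htail) (sub_pos.2 hmid) + 4 * c ^ 2 * sub_nonneg.2 hcs
  refine ⟨key, ?_⟩
  have hpos : 0 < 2 * c * stdPdf c := mul_pos (mul_pos two_pos hc) (stdPdf_pos c)
  rw [huberVar, one_lt_div (pow_pos (hpos.trans hmid) 2)]
  exact key
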